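/- (Equivalent form of the recurrence relation for 2D q-Appell polynomials.) Assume a_0 ≠ 0. Then for every n ≥ 1: A_{n,q}(qx,y) = q^{n}(x + q^{−1}(α_1 + β_0 y)) · A_{n−1,q}(x,y) + (1/[n]_q) Σ_{k=1}^{n−1} [n choose k−1]_q q^{k−1} (α_{n−k+1} + [n−k+1]_q β_{n−k} y) A_{k−1,q}(x,y), where A_{n,q}(qx,y) denotes the polynomial obtained from A_{n,q}(x,y) by substituting qx for x. -/

import Mathlib

noncomputable section

open Finset MvPolynomial

/-- The `q`-integer `[n]_q = 1 + q + ⋯ + q^(n-1)`. -/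
def qInt {K : Type*} [Field K] (q : K) (n : ℕ) : K := ∑ i ∈ Finset.range n, q ^ i

/-- The `q`-factorial `[n]_q! = [1]_q [2]_q ⋯ [n]_q`. -/
def qFact {K : Type*} [Field K] (q : K) (n : ℕ) : K := ∏ k ∈ Finset.range n, qInt q (k + 1)

/-- The `q`-binomial coefficient `[n choose k]_q`. -/
def qChoose {K : Type*} [Field K] (q : K) (n k : ℕ) : K :=
  qFact q n / (qFact q k * qFact q (n - k))

/-- The partial `q`-derivative in the variable `v` (v = 0 is `x`, v = 1 is `y`),
the linear operator determined by `D_{q,x}(x^m y^l) = [m]_q x^(m-1) y^l` and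
`D_{q,y}(x^m y^l) = [l]_q x^m y^(l-1)`. -/
def qDeriv {K : Type*} [Field K] (q : K) (v : Fin 2) (P : MvPolynomial (Fin 2) K) :
    MvPolynomial (Fin 2) K :=
  ∑ m ∈ P.support, monomial (m - Finsupp.single v 1) (P.coeff m * qInt q (m v))

/-- Substitution `x ↦ c·x` in a polynomial in the two variables `x = X 0`, `y = X 1`. -/
def substX {K : Type*} [Field K] (c : K) (P : MvPolynomial (Fin 2) K) :
    MvPolynomial (Fin 2) K :=
  aeval (fun i : Fin 2 => if i = 0 then C c * X 0 else X 1) P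

/-- Substitution `y ↦ c·y` in a polynomial in the two variables `x = X 0`, `y = X 1`. -/
def substY {K : Type*} [Field K] (c : K) (P : MvPolynomial (Fin 2) K) :
    MvPolynomial (Fin 2) K :=
  aeval (fun i : Fin 2 => if i = 0 then X 0 else C c * X 1) P

/-- The 2D `q`-Appell polynomials attached to a coefficient sequence `a`:
`A_{n,q}(x,y) = Σ_{i+j+k=n} ([n]_q!/([i]_q![j]_q![k]_q!)) a_i q^(k(k-1)/2) x^j y^k`. -/
def appell {K : Type*} [Field K] (q : K) (a : ℕ → K) (n : ℕ) : MvPolynomial (Fin 2) K :=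
  ∑ i ∈ Finset.range (n + 1), ∑ j ∈ Finset.range (n + 1 - i),
    monomial (Finsupp.single (0 : Fin 2) j + Finsupp.single (1 : Fin 2) (n - i - j))
      (qFact q n / (qFact q i * qFact q j * qFact q (n - i - j)) * a i *
        q ^ ((n - i - j) * (n - i - j - 1) / 2))

/-!
Write `G_c(t) = Σ cₙ tⁿ/[n]_q!`. Then `F(t) = G_A(t) = A_q(t) e_q(xt) E_q(yt)` with
`A = (A_{n,q}(x,y))ₙ`, and substituting `qx` for `x` gives `S(t) = A_q(t) e_q(qxt) E_q(yt)`.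
Each factor has a simple `q`-difference: the defining relations of `α` and `β` say
`A_q(t) - A_q(qt) = (1 - q) G_α(t) A_q(qt)` and `A_q(t) = G_β(t) A_q(qt)`, while
`e_q(ut) - e_q(qut) = (1 - q) u t e_q(ut)` and `E_q(yt) - E_q(qyt) = (1 - q) y t E_q(qyt)`.
Telescoping the product gives `S(t) - S(qt) = (1 - q) (G_α(t) + t y G_β(t) + q x t) F(qt)`,
and the left side is `(1 - q) t (D_q S)(t)`. Comparing coefficients of `tⁿ`, where `α₀ = 0`
because `a₀ ≠ 0`, yields the recurrence.
-/

section QAppell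

variable {K : Type*} [Field K]

theorem qInt_zero (q : K) : qInt q 0 = 0 := by simp [qInt]

theorem qInt_one (q : K) : qInt q 1 = 1 := by simp [qInt]

theorem one_sub_mul_qInt (q : K) (n : ℕ) : (1 - q) * qInt q n = 1 - q ^ n :=
  mul_neg_geom_sum q n

theorem qFact_succ (q : K) (n : ℕ) : qFact q (n + 1) = qFact q n * qInt q (n + 1) :=
  prod_range_succ _ n

theorem qFact_ne_zero {q : K} (hq : ∀ n : ℕ, 1 ≤ n → qInt q n ≠ 0) (n : ℕ) :
    qFact q n ≠ 0 :=
  prod_ne_zero_iff.2 fun k _ => hq (k + 1) (Nat.le_add_left 1 k)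

theorem qChoose_succ_self {q : K} (hq : ∀ n : ℕ, 1 ≤ n → qInt q n ≠ 0) (n : ℕ) :
    qChoose q (n + 1) n = qInt q (n + 1) := by
  have hn := qFact_ne_zero hq n
  have h1 : qFact q 1 = 1 := by simp [qFact, qInt]
  rw [qChoose, Nat.add_sub_cancel_left, qFact_succ, h1]
  field_simp

section

variable {R : Type*} [CommRing R] [Algebra K R]

def qEgf (q : K) (c : ℕ → R) : PowerSeries R :=
  PowerSeries.mk fun n => (qFact q n)⁻¹ • c n

@[simp]
theorem coeff_qEgf (q : K) (c : ℕ → R) (n : ℕ) :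
    PowerSeries.coeff n (qEgf q c) = (qFact q n)⁻¹ • c n :=
  PowerSeries.coeff_mk _ _

theorem rescale_qEgf (q : K) (c : ℕ → R) :
    PowerSeries.rescale (algebraMap K R q) (qEgf q c) = qEgf q fun n => q ^ n • c n := by
  ext n
  rw [PowerSeries.coeff_rescale, coeff_qEgf, coeff_qEgf, ← map_pow, ← Algebra.smul_def,
    smul_comm]

theorem map_qEgf {S : Type*} [CommRing S] [Algebra K S] (f : R →ₐ[K] S) (q : K)
    (c : ℕ → R) :
    PowerSeries.map (f : R →+* S) (qEgf q c) = qEgf q fun n => f (c n) := by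
  ext n
  simp

theorem qEgf_mul_left (q : K) (r : R) (c : ℕ → R) :
    qEgf q (fun n => r * c n) = PowerSeries.C r * qEgf q c := by
  ext n
  simp

theorem qEgf_sub_rescale {q : K} (hq : ∀ n : ℕ, 1 ≤ n → qInt q n ≠ 0) (c : ℕ → R) :
    qEgf q c - PowerSeries.rescale (algebraMap K R q) (qEgf q c) =
      (1 - q) • (PowerSeries.X * qEgf q fun n => c (n + 1)) := by
  ext (_ | m)
  · rw [map_sub, PowerSeries.coeff_rescale, PowerSeries.coeff_smul, PowerSeries.coeff_zero_X_mul]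
    simp
  · have hm := qFact_ne_zero hq m
    have hm1 := hq (m + 1) (Nat.le_add_left 1 m)
    have key : (qFact q (m + 1))⁻¹ - q ^ (m + 1) * (qFact q (m + 1))⁻¹ =
        (1 - q) * (qFact q m)⁻¹ := by
      rw [← one_sub_mul, ← one_sub_mul_qInt, qFact_succ]
      field_simp
    rw [map_sub, PowerSeries.coeff_rescale, PowerSeries.coeff_smul, PowerSeries.coeff_succ_X_mul,
      coeff_qEgf, coeff_qEgf, ← map_pow, ← Algebra.smul_def, smul_smul, smul_smul, ← sub_smul,
      key]

theorem qEgf_mul {q : K} (hq : ∀ n : ℕ, 1 ≤ n → qInt q n ≠ 0) (c d : ℕ → R) :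
    qEgf q c * qEgf q d =
      qEgf q fun n => ∑ p ∈ antidiagonal n, qChoose q n p.1 • (c p.1 * d p.2) := by
  ext n
  rw [PowerSeries.coeff_mul, coeff_qEgf, smul_sum]
  refine sum_congr rfl fun p hp => ?_
  obtain rfl : p.1 + p.2 = n := mem_antidiagonal.mp hp
  have h1 := qFact_ne_zero hq p.1
  have h2 := qFact_ne_zero hq p.2
  have h12 := qFact_ne_zero hq (p.1 + p.2)
  rw [coeff_qEgf, coeff_qEgf, smul_mul_smul_comm, smul_smul, qChoose, Nat.add_sub_cancel_left]
  congr 1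
  field_simp

def smallQExp (q : K) (x : R) : PowerSeries R := qEgf q fun n => x ^ n

def bigQExp (q : K) (y : R) : PowerSeries R := qEgf q fun n => q ^ (n * (n - 1) / 2) • y ^ n

theorem rescale_smallQExp (q : K) (x : R) :
    PowerSeries.rescale (algebraMap K R q) (smallQExp q x) = smallQExp q (q • x) := by
  simp only [smallQExp, rescale_qEgf, smul_pow]

theorem smallQExp_sub_rescale {q : K} (hq : ∀ n : ℕ, 1 ≤ n → qInt q n ≠ 0) (x : R) :
    smallQExp q x - PowerSeries.rescale (algebraMap K R q) (smallQExp q x) =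
      (1 - q) • (PowerSeries.X * PowerSeries.C x * smallQExp q x) := by
  simp only [smallQExp, qEgf_sub_rescale hq, pow_succ', qEgf_mul_left, mul_assoc]

theorem bigQExp_sub_rescale {q : K} (hq : ∀ n : ℕ, 1 ≤ n → qInt q n ≠ 0) (y : R) :
    bigQExp q y - PowerSeries.rescale (algebraMap K R q) (bigQExp q y) =
      (1 - q) • (PowerSeries.X * PowerSeries.C y *
        PowerSeries.rescale (algebraMap K R q) (bigQExp q y)) := by
  rw [bigQExp, qEgf_sub_rescale hq, rescale_qEgf, mul_assoc, ← qEgf_mul_left]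
  congr 3
  funext n
  rw [Nat.triangle_succ, pow_add, pow_succ', mul_smul, smul_comm (q ^ n)]
  simp only [mul_smul_comm]

theorem sub_rescale_mul_qExp {q : K} (hq : ∀ n : ℕ, 1 ≤ n → qInt q n ≠ 0)
    {A Gα Gβ : PowerSeries R}
    (hα : A - PowerSeries.rescale (algebraMap K R q) A =
      (1 - q) • (Gα * PowerSeries.rescale (algebraMap K R q) A))
    (hβ : A = Gβ * PowerSeries.rescale (algebraMap K R q) A) (x y : R) :
    A * smallQExp q x * bigQExp q y -
        PowerSeries.rescale (algebraMap K R q) (A * smallQExp q x * bigQExp q y) =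
      (1 - q) • ((Gα + PowerSeries.X * PowerSeries.C y * Gβ + PowerSeries.X * PowerSeries.C x) *
        (PowerSeries.rescale (algebraMap K R q) A * smallQExp q x *
          PowerSeries.rescale (algebraMap K R q) (bigQExp q y))) := by
  have hx := smallQExp_sub_rescale hq x
  have hy := bigQExp_sub_rescale hq y
  set r := PowerSeries.rescale (algebraMap K R q)
  simp only [Algebra.smul_def, map_mul] at *
  linear_combination (A * smallQExp q x) * hy + (smallQExp q x * r (bigQExp q y)) * hα +
    (r A * r (bigQExp q y)) * hx +
    (algebraMap K (PowerSeries R) (1 - q) * PowerSeries.X * PowerSeries.C y * smallQExp q x *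
      r (bigQExp q y)) * hβ

theorem mk_div_qFact (q : K) (c : ℕ → K) :
    PowerSeries.mk (fun n => c n / qFact q n) = qEgf q c := by
  ext n
  simp [div_eq_inv_mul]

theorem mk_mul_pow_div_qFact (q : K) (c : ℕ → K) :
    PowerSeries.mk (fun n => c n * q ^ n / qFact q n) = PowerSeries.rescale q (qEgf q c) := by
  have := rescale_qEgf (R := K) q c
  simp only [Algebra.algebraMap_self, RingHom.id_apply, smul_eq_mul] at this
  rw [this, ← mk_div_qFact]
  simp only [mul_comm]

theorem mk_ite_div_qFact (q : K) (c : ℕ → K) :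
    PowerSeries.mk (fun n => if n = 0 then (0 : K) else c n / qFact q (n - 1)) =
      PowerSeries.X * qEgf q fun n => c (n + 1) := by
  ext (_ | n)
  · simp
  · simp [div_eq_inv_mul]

theorem map_algebraMap_qEgf (q : K) (c : ℕ → K) :
    PowerSeries.map (algebraMap K R) (qEgf q c) = qEgf q fun n => algebraMap K R (c n) :=
  map_qEgf (Algebra.ofId K R) q c

theorem qEgf_algebraMap_sub_rescale {q : K} (hq : ∀ n : ℕ, 1 ≤ n → qInt q n ≠ 0)
    {a α : ℕ → K}
    (hα : PowerSeries.mk (fun n => if n = 0 then (0 : K) else a n / qFact q (n - 1)) =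
      PowerSeries.mk (fun n => α n / qFact q n) *
        PowerSeries.mk (fun n => a n * q ^ n / qFact q n)) :
    (qEgf q fun n => algebraMap K R (a n)) -
        PowerSeries.rescale (algebraMap K R q) (qEgf q fun n => algebraMap K R (a n)) =
      (1 - q) • ((qEgf q fun n => algebraMap K R (α n)) *
        PowerSeries.rescale (algebraMap K R q) (qEgf q fun n => algebraMap K R (a n))) := by
  rw [mk_ite_div_qFact, mk_div_qFact, mk_mul_pow_div_qFact] at hα
  have hαR := congrArg (PowerSeries.map (algebraMap K R)) hα
  rw [map_mul, map_mul, PowerSeries.map_X, ← PowerSeries.rescale_map, map_algebraMap_qEgf,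
    map_algebraMap_qEgf, map_algebraMap_qEgf] at hαR
  rw [qEgf_sub_rescale hq, hαR]

theorem qEgf_algebraMap_eq_mul_rescale {q : K} {a β : ℕ → K}
    (hβ : PowerSeries.mk (fun n => a n / qFact q n) =
      PowerSeries.mk (fun n => β n / qFact q n) *
        PowerSeries.mk (fun n => a n * q ^ n / qFact q n)) :
    (qEgf q fun n => algebraMap K R (a n)) =
      (qEgf q fun n => algebraMap K R (β n)) *
        PowerSeries.rescale (algebraMap K R q) (qEgf q fun n => algebraMap K R (a n)) := by
  rw [mk_div_qFact, mk_div_qFact, mk_mul_pow_div_qFact] at hβ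
  have hβR := congrArg (PowerSeries.map (algebraMap K R)) hβ
  rwa [map_mul, ← PowerSeries.rescale_map, map_algebraMap_qEgf, map_algebraMap_qEgf] at hβR

theorem eq_zero_of_mk_ite_div_qFact {q : K} {a α : ℕ → K} (ha0 : a 0 ≠ 0)
    (hα : PowerSeries.mk (fun n => if n = 0 then (0 : K) else a n / qFact q (n - 1)) =
      PowerSeries.mk (fun n => α n / qFact q n) *
        PowerSeries.mk (fun n => a n * q ^ n / qFact q n)) :
    α 0 = 0 := by
  have h0 := congrArg (PowerSeries.coeff 0) hα
  simp [PowerSeries.coeff_mul, qFact] at h0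
  exact h0.resolve_right ha0

-- The bracket `α n + [n]_q β (n - 1) y` of the recurrence; at `n = 0` the junk value
-- `β (0 - 1)` is multiplied by `qInt q 0 = 0`.
def recCoeff (q : K) (α β : ℕ → K) (y : R) (n : ℕ) : R :=
  algebraMap K R (α n) + (qInt q n * β (n - 1)) • y

theorem recCoeff_zero (q : K) {α : ℕ → K} (hα0 : α 0 = 0) (β : ℕ → K) (y : R) :
    recCoeff q α β y 0 = 0 := by
  simp [recCoeff, hα0, qInt_zero]

theorem qEgf_recCoeff {q : K} (hq : ∀ n : ℕ, 1 ≤ n → qInt q n ≠ 0) (α β : ℕ → K)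
    (y : R) :
    qEgf q (recCoeff q α β y) =
      (qEgf q fun n => algebraMap K R (α n)) +
        PowerSeries.X * PowerSeries.C y * qEgf q fun n => algebraMap K R (β n) := by
  ext (_ | n)
  · rw [map_add, mul_assoc, PowerSeries.coeff_zero_X_mul]
    simp [recCoeff, qInt_zero]
  · have hn := qFact_ne_zero hq n
    have hn1 := hq (n + 1) (Nat.le_add_left 1 n)
    rw [map_add, mul_assoc, PowerSeries.coeff_succ_X_mul, PowerSeries.coeff_C_mul]
    simp only [coeff_qEgf]
    rw [recCoeff, smul_add, Nat.add_sub_cancel, smul_smul, qFact_succ, mul_inv, mul_assoc,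
      inv_mul_cancel_left₀ hn1]
    simp only [Algebra.smul_def, map_mul]
    ring

end

theorem qEgf_appell {q : K} (hq : ∀ n : ℕ, 1 ≤ n → qInt q n ≠ 0) (a : ℕ → K) :
    qEgf q (appell q a) =
      (qEgf q fun n => algebraMap K (MvPolynomial (Fin 2) K) (a n)) * smallQExp q (X 0) *
        bigQExp q (X 1) := by
  ext n : 1
  rw [mul_assoc, PowerSeries.coeff_mul, Finset.Nat.sum_antidiagonal_eq_sum_range_succ_mk,
    coeff_qEgf, appell, smul_sum]
  refine sum_congr rfl fun i hi => ?_
  have hin : n + 1 - i = n - i + 1 := by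
    have := mem_range.mp hi
    omega
  rw [PowerSeries.coeff_mul, Finset.Nat.sum_antidiagonal_eq_sum_range_succ_mk, hin, smul_sum,
    mul_sum]
  refine sum_congr rfl fun j _ => ?_
  have h1 := qFact_ne_zero hq n
  have h2 := qFact_ne_zero hq i
  have h3 := qFact_ne_zero hq j
  have h4 := qFact_ne_zero hq (n - i - j)
  simp only [smallQExp, bigQExp, coeff_qEgf, monomial_add_single, ← C_mul_X_pow_eq_monomial,
    smul_eq_C_mul, algebraMap_eq]
  have key : (qFact q n)⁻¹ * (qFact q n / (qFact q i * qFact q j * qFact q (n - i - j)) * a i) =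
      (qFact q i)⁻¹ * a i * ((qFact q j)⁻¹ * (qFact q (n - i - j))⁻¹) := by
    field_simp
  replace key := congrArg (C : K → MvPolynomial (Fin 2) K) key
  simp only [C_mul] at key ⊢
  linear_combination
    (C (q ^ ((n - i - j) * (n - i - j - 1) / 2)) * X 0 ^ j * X 1 ^ (n - i - j)) * key

theorem qEgf_substX_appell {q : K} (hq : ∀ n : ℕ, 1 ≤ n → qInt q n ≠ 0) (a : ℕ → K) :
    (qEgf q fun n => substX q (appell q a n)) =
      (qEgf q fun n => algebraMap K (MvPolynomial (Fin 2) K) (a n)) * smallQExp q (q • X 0) *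
        bigQExp q (X 1) := by
  let φ : MvPolynomial (Fin 2) K →ₐ[K] MvPolynomial (Fin 2) K :=
    aeval fun i => if i = 0 then C q * X 0 else X 1
  have h := congrArg (PowerSeries.map (φ : MvPolynomial (Fin 2) K →+* MvPolynomial (Fin 2) K))
    (qEgf_appell hq a)
  simp only [map_mul, smallQExp, bigQExp, map_qEgf] at h
  simpa [φ, substX, smallQExp, bigQExp, smul_eq_C_mul] using h

theorem X_mul_qEgf_substX_appell_succ {q : K} (hq1 : q ≠ 1)
    (hq : ∀ n : ℕ, 1 ≤ n → qInt q n ≠ 0) {a α β : ℕ → K}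
    (hα : PowerSeries.mk (fun n => if n = 0 then (0 : K) else a n / qFact q (n - 1)) =
      PowerSeries.mk (fun n => α n / qFact q n) *
        PowerSeries.mk (fun n => a n * q ^ n / qFact q n))
    (hβ : PowerSeries.mk (fun n => a n / qFact q n) =
      PowerSeries.mk (fun n => β n / qFact q n) *
        PowerSeries.mk (fun n => a n * q ^ n / qFact q n)) :
    PowerSeries.X * (qEgf q fun n => substX q (appell q a (n + 1))) =
      (qEgf q fun n => q ^ n • appell q a n) *
        (qEgf q (recCoeff q α β (X 1)) + PowerSeries.X * PowerSeries.C (q • X 0)) := by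
  have h := qEgf_sub_rescale hq fun n => substX q (appell q a n)
  rw [qEgf_substX_appell hq, sub_rescale_mul_qExp hq (qEgf_algebraMap_sub_rescale hq hα)
    (qEgf_algebraMap_eq_mul_rescale hβ), ← qEgf_recCoeff hq, ← rescale_smallQExp, ← map_mul,
    ← map_mul, ← qEgf_appell hq, rescale_qEgf] at h
  rw [← smul_right_injective _ (sub_ne_zero.2 hq1.symm) h, mul_comm]

theorem substX_appell_succ {q : K} (hq1 : q ≠ 1)
    (hq : ∀ n : ℕ, 1 ≤ n → qInt q n ≠ 0) {a α β : ℕ → K} (ha0 : a 0 ≠ 0)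
    (hα : PowerSeries.mk (fun n => if n = 0 then (0 : K) else a n / qFact q (n - 1)) =
      PowerSeries.mk (fun n => α n / qFact q n) *
        PowerSeries.mk (fun n => a n * q ^ n / qFact q n))
    (hβ : PowerSeries.mk (fun n => a n / qFact q n) =
      PowerSeries.mk (fun n => β n / qFact q n) *
        PowerSeries.mk (fun n => a n * q ^ n / qFact q n)) (m : ℕ) :
    substX q (appell q a (m + 1)) =
      q ^ (m + 1) • (X 0 * appell q a m) + (qInt q (m + 1))⁻¹ • ∑ j ∈ range (m + 1),
        qChoose q (m + 1) j • (q ^ j • appell q a j * recCoeff q α β (X 1) (m + 1 - j)) := by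
  have h := congrArg (PowerSeries.coeff (m + 1)) (X_mul_qEgf_substX_appell_succ hq1 hq hα hβ)
  rw [PowerSeries.coeff_succ_X_mul, mul_add, map_add, qEgf_mul hq, mul_left_comm,
    PowerSeries.coeff_succ_X_mul, mul_comm, PowerSeries.coeff_C_mul, coeff_qEgf, coeff_qEgf,
    coeff_qEgf, Finset.Nat.sum_antidiagonal_eq_sum_range_succ fun i j =>
      qChoose q (m + 1) i • (q ^ i • appell q a i * recCoeff q α β (X 1) j),
    sum_range_succ, Nat.sub_self, recCoeff_zero q (eq_zero_of_mk_ite_div_qFact ha0 hα), mul_zero,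
    smul_zero, add_zero, qFact_succ, mul_inv] at h
  apply smul_right_injective _ (inv_ne_zero (qFact_ne_zero hq m))
  dsimp only
  rw [h]
  simp only [smul_mul_assoc, mul_smul_comm]
  module

theorem recCoeff_eq_C {σ : Type*} (q : K) (α β : ℕ → K) (y : MvPolynomial σ K) (n : ℕ) :
    recCoeff q α β y n = C (α n) + C (qInt q n * β (n - 1)) * y := by
  rw [recCoeff, algebraMap_eq, smul_eq_C_mul]

end QAppell

theorem appell_recurrence'_general
    {K : Type*} [Field K] (q : K) (hq0 : q ≠ 0) (hq1 : q ≠ 1)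
    (hq : ∀ n : ℕ, 1 ≤ n → qInt q n ≠ 0)
    (a : ℕ → K) (ha0 : a 0 ≠ 0)
    (α β : ℕ → K)
    (hα : PowerSeries.mk (fun n => if n = 0 then (0 : K) else a n / qFact q (n - 1)) =
      PowerSeries.mk (fun n => α n / qFact q n) *
        PowerSeries.mk (fun n => a n * q ^ n / qFact q n))
    (hβ : PowerSeries.mk (fun n => a n / qFact q n) =
      PowerSeries.mk (fun n => β n / qFact q n) *
        PowerSeries.mk (fun n => a n * q ^ n / qFact q n))
    (n : ℕ) (hn : 1 ≤ n) :
    substX q (appell q a n) =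
      C (q ^ n) * (X 0 + C q⁻¹ * (C (α 1) + C (β 0) * X 1)) * appell q a (n - 1) +
      C (qInt q n)⁻¹ *
        ∑ k ∈ Finset.Icc 1 (n - 1), C (qChoose q n (k - 1) * q ^ (k - 1)) *
          (C (α (n - k + 1)) + C (qInt q (n - k + 1) * β (n - k)) * X 1) *
            appell q a (k - 1) := by
  obtain ⟨m, rfl⟩ := Nat.exists_eq_add_of_le' hn
  rw [substX_appell_succ hq1 hq ha0 hα hβ, Nat.add_sub_cancel, sum_range_succ, smul_add,
    ← add_assoc, add_right_comm, ← Ico_add_one_right_eq_Icc, sum_Ico_eq_sum_range,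
    Nat.add_sub_cancel]
  congr 1
  · have hI := hq (m + 1) (Nat.le_add_left 1 m)
    rw [Nat.add_sub_cancel_left, qChoose_succ_self hq, recCoeff_eq_C, qInt_one, one_mul,
      Nat.sub_self]
    have hscalar : C (qInt q (m + 1))⁻¹ * C (qInt q (m + 1)) * C (q ^ m) =
        (C (q ^ (m + 1)) * C q⁻¹ : MvPolynomial (Fin 2) K) := by
      simp only [← C_mul]
      congr 1
      field_simp
      ring
    simp only [smul_eq_C_mul]
    linear_combination appell q a m * (C (α 1) + C (β 0) * X 1) * hscalar
  · rw [smul_eq_C_mul]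
    congr 1
    refine sum_congr rfl fun j hj => ?_
    have := mem_range.mp hj
    rw [recCoeff_eq_C, show 1 + j - 1 = j by omega, show m + 1 - (1 + j) + 1 = m + 1 - j by omega,
      show m + 1 - (1 + j) = m + 1 - j - 1 by omega]
    simp only [smul_eq_C_mul, C_mul]
    ring

/-- Equivalent form of the recurrence relation for 2D `q`-Appell polynomials. -/
theorem appell_recurrence'
    {K : Type*} [Field K] [CharZero K] (q : K) (hq0 : q ≠ 0) (hq1 : q ≠ 1)
    (hq : ∀ n : ℕ, 1 ≤ n → qInt q n ≠ 0)
    (a : ℕ → K) (ha0 : a 0 ≠ 0)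
    (α β : ℕ → K)
    (hα : PowerSeries.mk (fun n => if n = 0 then (0 : K) else a n / qFact q (n - 1)) =
      PowerSeries.mk (fun n => α n / qFact q n) *
        PowerSeries.mk (fun n => a n * q ^ n / qFact q n))
    (hβ : PowerSeries.mk (fun n => a n / qFact q n) =
      PowerSeries.mk (fun n => β n / qFact q n) *
        PowerSeries.mk (fun n => a n * q ^ n / qFact q n))
    (n : ℕ) (hn : 1 ≤ n) :
    substX q (appell q a n) =
      C (q ^ n) * (X 0 + C q⁻¹ * (C (α 1) + C (β 0) * X 1)) * appell q a (n - 1) +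
      C (qInt q n)⁻¹ *
        ∑ k ∈ Finset.Icc 1 (n - 1), C (qChoose q n (k - 1) * q ^ (k - 1)) *
          (C (α (n - k + 1)) + C (qInt q (n - k + 1) * β (n - k)) * X 1) *
            appell q a (k - 1) :=
  appell_recurrence'_general q hq0 hq1 hq a ha0 α β hα hβ n hn
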